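/- For every natural number n ≥ 1, the number of strings of length n over the three-letter alphabet {E, L, R} whose first letter is E and in which no two consecutive letters both belong to {L, R} (i.e., the cardinality of the set of functions f : Fin n → Fin 3 with f(0) = 0 such that there is no index i with both f(i) ≠ 0 and f(i+1) ≠ 0) equals the Jacobsthal number J(n+1). -/

import Mathlib

/-!
Classify admissible strings by their first letter: after `E` comes any admissible string, after
`L` or `R` comes `E` followed by any admissible string. So the number `c n` of admissible strings
of length `n` satisfies `c (n + 2) = c (n + 1) + 2 c n` with `c 0 = 1`, `c 1 = 3`, whence
`c n = J (n + 2)`, and this also counts the admissible strings of length `n + 1` starting with `E`.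
-/

def J : ℕ → ℕ
  | 0 => 0
  | 1 => 1
  | n + 2 => J (n + 1) + 2 * J n

open Finset

section Admissible

variable {α : Type*} (e : α)

/-- The letter `e` plays the role of `E`. -/
def Admissible {n : ℕ} (f : Fin n → α) : Prop :=
  ∀ i : Fin n, ∀ h : (i : ℕ) + 1 < n, ¬(f i ≠ e ∧ f ⟨(i : ℕ) + 1, h⟩ ≠ e)

instance [DecidableEq α] {n : ℕ} : DecidablePred (Admissible e (n := n)) := fun _ => by
  unfold Admissible; infer_instance

variable {e}

theorem admissible_cons_iff {n : ℕ} (a : α) (g : Fin n → α) :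
    Admissible e (Fin.cons a g : Fin (n + 1) → α) ↔
      (∀ h : 0 < n, a ≠ e → g ⟨0, h⟩ = e) ∧ Admissible e g := by
  constructor
  · intro hf
    refine ⟨fun h ha => ?_, fun i h => hf i.succ (by simpa using h)⟩
    by_contra hg
    exact hf 0 (by simpa using h) ⟨ha, hg⟩
  · rintro ⟨hhead, htail⟩ i
    induction i using Fin.cases with
    | zero => exact fun h ⟨ha, hg⟩ => hg (hhead (by simpa using h) ha)
    | succ i => exact fun h => htail i (by simpa using h)

theorem admissible_cons_self_iff {n : ℕ} (g : Fin n → α) :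
    Admissible e (Fin.cons e g : Fin (n + 1) → α) ↔ Admissible e g := by
  simp [admissible_cons_iff]

theorem admissible_cons_iff_of_ne {n : ℕ} {a : α} (ha : a ≠ e) (g : Fin (n + 1) → α) :
    Admissible e (Fin.cons a g : Fin (n + 2) → α) ↔ g 0 = e ∧ Admissible e g := by
  simp [admissible_cons_iff, ha]

theorem Admissible.tail {n : ℕ} {f : Fin (n + 1) → α} (hf : Admissible e f) :
    Admissible e (Fin.tail f) :=
  ((admissible_cons_iff (f 0) (Fin.tail f)).1 (by rwa [Fin.cons_self_tail])).2

theorem admissible_of_le_one {n : ℕ} (hn : n ≤ 1) (f : Fin n → α) : Admissible e f :=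
  fun i h => absurd h (by omega)

end Admissible

section Counting

variable {α : Type*} [Fintype α] [DecidableEq α] (e : α)

theorem card_admissible_of_le_one {n : ℕ} (hn : n ≤ 1) :
    Fintype.card {f : Fin n → α // Admissible e f} = Fintype.card α ^ n := by
  rw [Fintype.card_congr (Equiv.subtypeUnivEquiv (admissible_of_le_one hn)), Fintype.card_fun,
    Fintype.card_fin]

theorem card_admissible_cons_self_eq (n : ℕ) :
    Fintype.card {f : Fin (n + 1) → α // f 0 = e ∧ Admissible e f} =
      Fintype.card {g : Fin n → α // Admissible e g} :=
  Fintype.card_congr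
    { toFun f := ⟨Fin.tail f.1, f.2.2.tail⟩
      invFun g := ⟨Fin.cons e g.1, rfl, (admissible_cons_self_iff g.1).2 g.2⟩
      left_inv := fun ⟨f, hf0, _⟩ => by ext1; simp [← hf0]
      right_inv := fun g => by simp }

theorem card_admissible_succ (n : ℕ) :
    Fintype.card {f : Fin (n + 1) → α // Admissible e f} =
      ∑ a, Fintype.card {g : Fin n → α // Admissible e (Fin.cons a g : Fin (n + 1) → α)} := by
  rw [← Fintype.card_sigma]
  exact Fintype.card_congr <|
    ((Fin.consEquiv fun _ => α).symm.subtypeEquiv fun f => by simp [Fin.consEquiv]).trans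
      (Equiv.subtypeProdEquivSigmaSubtype fun a g => Admissible e (Fin.cons a g : Fin (n + 1) → α))

theorem card_admissible_add_two (n : ℕ) :
    Fintype.card {f : Fin (n + 2) → α // Admissible e f} =
      Fintype.card {f : Fin (n + 1) → α // Admissible e f} +
        (Fintype.card α - 1) * Fintype.card {f : Fin n → α // Admissible e f} := by
  have card_cons_self : Fintype.card {g : Fin (n + 1) → α // Admissible e (Fin.cons e g)} =
      Fintype.card {g : Fin (n + 1) → α // Admissible e g} :=
    Fintype.card_congr (Equiv.subtypeEquivRight admissible_cons_self_iff)
  have card_cons_of_ne (a : α) (ha : a ∈ ({e}ᶜ : Finset α)) :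
      Fintype.card {g : Fin (n + 1) → α // Admissible e (Fin.cons a g)} =
        Fintype.card {g : Fin n → α // Admissible e g} := by
    rw [← card_admissible_cons_self_eq]
    exact Fintype.card_congr
      (Equiv.subtypeEquivRight (admissible_cons_iff_of_ne (by simpa using ha)))
  rw [card_admissible_succ, Fintype.sum_eq_add_sum_compl e, card_cons_self,
    sum_congr rfl card_cons_of_ne, sum_const, card_compl, card_singleton, smul_eq_mul]

end Counting

theorem card_admissible_fin_three (n : ℕ) :
    Fintype.card {f : Fin n → Fin 3 // Admissible 0 f} = J (n + 2) := by
  induction n using Nat.twoStepInduction with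
  | zero => rw [card_admissible_of_le_one (0 : Fin 3) zero_le_one]; rfl
  | one => rw [card_admissible_of_le_one (0 : Fin 3) le_rfl]; rfl
  | more n ih₀ ih₁ => rw [card_admissible_add_two, ih₀, ih₁]; rfl

theorem count_admissible_startE_eq_jacobsthal (n : ℕ) (hn : 1 ≤ n) :
    Fintype.card {f : Fin n → Fin 3 //
      f ⟨0, hn⟩ = 0 ∧
      ∀ i : Fin n, ∀ h : (i : ℕ) + 1 < n,
        ¬(f i ≠ 0 ∧ f ⟨(i : ℕ) + 1, h⟩ ≠ 0)} = J (n + 1) := by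
  obtain ⟨m, rfl⟩ : ∃ m, n = m + 1 := ⟨n - 1, by omega⟩
  exact (card_admissible_cons_self_eq 0 m).trans (card_admissible_fin_three m)
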